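/- Let A ⊆ 𝔽 be measurable with Π(A) > 0, and set L_i = ∫_A R_i(f) Π(df) with L_0 = Π(A). Then for every i ≥ 1, L_i / L_{i−1} = f̂_{i−1}^{A}(Y_i) / f*(Y_i) almost surely and E[ (L_i / L_{i−1})^{1/2} − 1 | Y_1,…,Y_{i−1} ] = −h(f*, f̂_{i−1}^{A}) almost surely, under Y_1,Y_2,… i.i.d. with density f*; in particular X_i := (L_i/L_{i−1})^{1/2} − 1 + h(f*, f̂_{i−1}^{A}) is a martingale difference sequence. -/

import Mathlib

open MeasureTheory ProbabilityTheory Filter Finset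

/-- Kullback–Leibler divergence `K(f,g) = ∫ f log(f/g) dμ` between densities. -/
noncomputable def KLdiv {𝕐 : Type*} [MeasurableSpace 𝕐] (μ : Measure 𝕐)
    (f g : 𝕐 → ℝ) : ℝ :=
  ∫ y, f y * Real.log (f y / g y) ∂μ

/-- `V(f,g) = ∫ f (log(f/g))² dμ`. -/
noncomputable def Vdiv {𝕐 : Type*} [MeasurableSpace 𝕐] (μ : Measure 𝕐)
    (f g : 𝕐 → ℝ) : ℝ :=
  ∫ y, f y * Real.log (f y / g y) ^ 2 ∂μ

/-- Hellinger distance squared `H(f,g)² = ∫ (√f − √g)² dμ`. -/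
noncomputable def Hsq {𝕐 : Type*} [MeasurableSpace 𝕐] (μ : Measure 𝕐)
    (f g : 𝕐 → ℝ) : ℝ :=
  ∫ y, (Real.sqrt (f y) - Real.sqrt (g y)) ^ 2 ∂μ

/-- `h(f,g) = H(f,g)²/2`. -/
noncomputable def hdist {𝕐 : Type*} [MeasurableSpace 𝕐] (μ : Measure 𝕐)
    (f g : 𝕐 → ℝ) : ℝ :=
  Hsq μ f g / 2

/-- Likelihood ratio `R_n(θ) = ∏_{i=1}^n f_θ(Y_i)/f*(Y_i)` (here indices `0,…,n-1`). -/
noncomputable def Rlik {Θ 𝕐 Ω : Type*} (f : Θ → 𝕐 → ℝ) (fstar : 𝕐 → ℝ)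
    (Y : ℕ → Ω → 𝕐) (n : ℕ) (θ : Θ) (ω : Ω) : ℝ :=
  ∏ i ∈ Finset.range n, f θ (Y i ω) / fstar (Y i ω)

/-- Marginal likelihood ratio `I_n = ∫ R_n(f) Π(df)`. -/
noncomputable def margI {Θ 𝕐 Ω : Type*} [MeasurableSpace Θ] (Pri : Measure Θ)
    (f : Θ → 𝕐 → ℝ) (fstar : 𝕐 → ℝ) (Y : ℕ → Ω → 𝕐) (n : ℕ) (ω : Ω) : ℝ :=
  ∫ θ, Rlik f fstar Y n θ ω ∂Pri

/-- Numerator of the posterior probability of `A`: `L_{n} = ∫_A R_n(f) Π(df)`. -/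
noncomputable def Lnum {Θ 𝕐 Ω : Type*} [MeasurableSpace Θ] (Pri : Measure Θ)
    (f : Θ → 𝕐 → ℝ) (fstar : 𝕐 → ℝ) (Y : ℕ → Ω → 𝕐) (A : Set Θ) (n : ℕ) (ω : Ω) : ℝ :=
  ∫ θ in A, Rlik f fstar Y n θ ω ∂Pri

/-- The σ-algebra `𝒴_i` generated by the observations `Y_1,…,Y_i`. -/
def obsSigma {Ω 𝕐 : Type*} [MeasurableSpace 𝕐] (Y : ℕ → Ω → 𝕐) (i : ℕ) :
    MeasurableSpace Ω :=
  MeasurableSpace.comap (fun ω (j : Fin i) => Y j ω) inferInstance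

/-- Predictive density under the posterior restricted and normalized to `A`:
`f̂_n^A(y) = ∫_A f(y) R_n(f) Π(df) / ∫_A R_n(f) Π(df)`. -/
noncomputable def predDensA {Θ 𝕐 Ω : Type*} [MeasurableSpace Θ] (Pri : Measure Θ)
    (f : Θ → 𝕐 → ℝ) (fstar : 𝕐 → ℝ) (Y : ℕ → Ω → 𝕐) (A : Set Θ) (n : ℕ) (y : 𝕐)
    (ω : Ω) : ℝ :=
  (∫ θ in A, f θ y * Rlik f fstar Y n θ ω ∂Pri) / Lnum Pri f fstar Y A n ω


open scoped ENNReal NNReal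

-- auxiliary lemmas

lemma freezing_condexp {Ω α β : Type*} [MeasurableSpace Ω] [MeasurableSpace α] [MeasurableSpace β]
    (P : Measure Ω) [IsProbabilityMeasure P] (X : Ω → α) (W : Ω → β)
    (hX : Measurable X) (hW : Measurable W)
    (hmap : P.map (fun ω => (W ω, X ω)) = (P.map W).prod (P.map X))
    (G : β × α → ℝ) (hG : StronglyMeasurable G)
    (hGint : Integrable G ((P.map W).prod (P.map X))) :
    P[(fun ω => G (W ω, X ω)) | MeasurableSpace.comap W inferInstance] =ᵐ[P]
      fun ω => ∫ x, G (W ω, x) ∂(P.map X) := by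
  haveI : IsProbabilityMeasure (P.map X) := Measure.isProbabilityMeasure_map hX.aemeasurable
  haveI : IsProbabilityMeasure (P.map W) := Measure.isProbabilityMeasure_map hW.aemeasurable
  have hWX : AEMeasurable (fun ω => (W ω, X ω)) P := (hW.prodMk hX).aemeasurable
  have hGint'' := hGint
  rw [← hmap] at hGint''
  have hGint' : Integrable (fun ω => G (W ω, X ω)) P :=
    (integrable_map_measure hG.aestronglyMeasurable hWX).mp hGint''
  have hg : StronglyMeasurable (fun z => ∫ x, G (z, x) ∂(P.map X)) :=
    hG.integral_prod_right'
  have hgint : Integrable (fun z => ∫ x, G (z, x) ∂(P.map X)) (P.map W) :=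
    hGint.integral_prod_left
  have hgint' : Integrable (fun ω => ∫ x, G (W ω, x) ∂(P.map X)) P :=
    (integrable_map_measure hg.aestronglyMeasurable hW.aemeasurable).mp hgint
  refine (ae_eq_condExp_of_forall_setIntegral_eq hW.comap_le hGint' (fun s _ _ => ?_) ?_ ?_).symm
  · exact hgint'.integrableOn
  · rintro s ⟨t, ht, rfl⟩ _
    have h1 : ∫ ω in W ⁻¹' t, ∫ x, G (W ω, x) ∂(P.map X) ∂P
        = ∫ z in t, ∫ x, G (z, x) ∂(P.map X) ∂(P.map W) :=
      (setIntegral_map ht hg.aestronglyMeasurable hW.aemeasurable).symm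
    have h2 : ∫ z in t, ∫ x, G (z, x) ∂(P.map X) ∂(P.map W)
        = ∫ p in t ×ˢ (Set.univ : Set α), G p ∂((P.map W).prod (P.map X)) := by
      rw [setIntegral_prod _ hGint.integrableOn]
      simp [Measure.restrict_univ]
    have h3 : ∫ p in t ×ˢ (Set.univ : Set α), G p ∂((P.map W).prod (P.map X))
        = ∫ ω in W ⁻¹' t, G (W ω, X ω) ∂P := by
      rw [← hmap, setIntegral_map (ht.prod MeasurableSet.univ) hG.aestronglyMeasurable hWX]
      apply setIntegral_congr_set
      have : (fun ω => (W ω, X ω)) ⁻¹' (t ×ˢ (Set.univ : Set α)) = W ⁻¹' t := by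
        ext ω; simp
      rw [this]
      exact EventuallyEq.rfl
    rw [h1, h2, h3]
  · exact (hg.comp_measurable (measurable_iff_comap_le.2 le_rfl)).aestronglyMeasurable


lemma sqrt_mul_le_add_div_two {a b : ℝ} (ha : 0 ≤ a) (hb : 0 ≤ b) :
    Real.sqrt (a * b) ≤ (a + b) / 2 := by
  have h2 := two_mul_le_add_sq (Real.sqrt a) (Real.sqrt b)
  rw [Real.sq_sqrt ha, Real.sq_sqrt hb] at h2
  rw [Real.sqrt_mul ha b]
  nlinarith [Real.sqrt_nonneg a, Real.sqrt_nonneg b]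

lemma abs_sqrt_sub_one_le {x : ℝ} (hx : 0 ≤ x) : |Real.sqrt x - 1| ≤ (x + 3) / 2 := by
  have h1 : Real.sqrt x ≤ (x + 1) / 2 := by
    have := sqrt_mul_le_add_div_two hx (zero_le_one)
    simpa using this
  rw [abs_le]
  constructor
  · nlinarith [Real.sqrt_nonneg x]
  · nlinarith

lemma mul_sqrt_div {a b : ℝ} (ha : 0 ≤ a) (hb : 0 ≤ b) :
    b * (Real.sqrt (a / b) - 1) = Real.sqrt (a * b) - b := by
  rcases eq_or_lt_of_le hb with h | h
  · simp [← h]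
  · have hb' : b ≠ 0 := h.ne'
    have : Real.sqrt (a / b) * b = Real.sqrt (a * b) := by
      have hsb : Real.sqrt b ≠ 0 := by positivity
      rw [Real.sqrt_div ha, Real.sqrt_mul ha]
      field_simp
      nth_rewrite 1 [← Real.sq_sqrt hb]
      ring
    nlinarith [this]

lemma integrable_of_integral_eq_one' {𝕐 : Type*} [MeasurableSpace 𝕐] {μ : Measure 𝕐}
    {g : 𝕐 → ℝ} (h : ∫ y, g y ∂μ = 1) : Integrable g μ := by
  by_contra hc
  rw [integral_undef hc] at h
  exact one_ne_zero h.symm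

lemma aux_good {𝕐 : Type*} [MeasurableSpace 𝕐] {μ : Measure 𝕐} [SigmaFinite μ]
    {Θ : Type*} [MeasurableSpace Θ] {Pri : Measure Θ} [IsProbabilityMeasure Pri]
    {f : Θ → 𝕐 → ℝ} (hf_meas : Measurable (Function.uncurry f))
    (hf_nonneg : ∀ θ y, 0 ≤ f θ y) (hf_int : ∀ θ, ∫ y, f θ y ∂μ = 1)
    {fstar : 𝕐 → ℝ} (hfstar_meas : Measurable fstar)
    (hfstar_nonneg : ∀ y, 0 ≤ fstar y) (hfstar_int : ∫ y, fstar y ∂μ = 1)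
    {A : Set Θ} (hA : MeasurableSet A)
    {r : Θ → ℝ} (hr_meas : Measurable r) (hr_nonneg : ∀ θ, 0 ≤ r θ)
    (hL : 0 < ∫ θ in A, r θ ∂Pri) :
    (∫ y, (Real.sqrt (((∫ θ in A, f θ y * r θ ∂Pri) / (∫ θ in A, r θ ∂Pri)) / fstar y) - 1)
        ∂(μ.withDensity (fun y => ENNReal.ofReal (fstar y)))
      = -(hdist μ fstar (fun y => (∫ θ in A, f θ y * r θ ∂Pri) / (∫ θ in A, r θ ∂Pri)))) ∧
    (∫⁻ y, ‖(Real.sqrt (((∫ θ in A, f θ y * r θ ∂Pri) / (∫ θ in A, r θ ∂Pri)) / fstar y) - 1)‖₊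
        ∂(μ.withDensity (fun y => ENNReal.ofReal (fstar y))) ≤ 2) ∧
    (0 ≤ hdist μ fstar (fun y => (∫ θ in A, f θ y * r θ ∂Pri) / (∫ θ in A, r θ ∂Pri)) ∧
     hdist μ fstar (fun y => (∫ θ in A, f θ y * r θ ∂Pri) / (∫ θ in A, r θ ∂Pri)) ≤ 1) := by
  set ν : Measure 𝕐 := μ.withDensity (fun y => ENNReal.ofReal (fstar y)) with hν
  set Lz : ℝ := ∫ θ in A, r θ ∂Pri with hLz
  set N : 𝕐 → ℝ := fun y => ∫ θ in A, f θ y * r θ ∂Pri with hNdef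
  -- global integrabilities
  have hf_intg : ∀ θ, Integrable (f θ) μ := fun θ => integrable_of_integral_eq_one' (hf_int θ)
  have hfstar_intg : Integrable fstar μ := integrable_of_integral_eq_one' hfstar_int
  have hfθ_lint : ∀ θ, ∫⁻ y, ENNReal.ofReal (f θ y) ∂μ = 1 := by
    intro θ
    rw [← ofReal_integral_eq_lintegral_ofReal (hf_intg θ) (ae_of_all _ (hf_nonneg θ)),
      hf_int θ, ENNReal.ofReal_one]
  have hr_int : Integrable r (Pri.restrict A) := by
    by_contra hc
    rw [integral_undef hc] at hLz
    exact lt_irrefl 0 (hLz ▸ hL)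
  have hLlint : ∫⁻ θ in A, ENNReal.ofReal (r θ) ∂Pri = ENNReal.ofReal Lz :=
    (ofReal_integral_eq_lintegral_ofReal hr_int (ae_of_all _ hr_nonneg)).symm
  -- joint measurability
  have hg2 : Measurable (fun p : 𝕐 × Θ => ENNReal.ofReal (f p.2 p.1 * r p.2)) :=
    ((hf_meas.comp measurable_swap).mul (hr_meas.comp measurable_snd)).ennreal_ofReal
  -- Tonelli
  have hswap : ∫⁻ y, (∫⁻ θ in A, ENNReal.ofReal (f θ y * r θ) ∂Pri) ∂μ = ENNReal.ofReal Lz := by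
    rw [lintegral_lintegral_swap (μ := μ) (ν := Pri.restrict A)
      (f := fun y θ => ENNReal.ofReal (f θ y * r θ)) hg2.aemeasurable]
    rw [← hLlint]
    refine lintegral_congr fun θ => ?_
    simp_rw [ENNReal.ofReal_mul (hf_nonneg θ _)]
    rw [lintegral_mul_const _ (hf_meas.of_uncurry_left.ennreal_ofReal), hfθ_lint θ, one_mul]
  have hFI_meas : Measurable (fun y => ∫⁻ θ in A, ENNReal.ofReal (f θ y * r θ) ∂Pri) :=
    hg2.lintegral_prod_right'
  have hFIfin : ∀ᵐ y ∂μ, (∫⁻ θ in A, ENNReal.ofReal (f θ y * r θ) ∂Pri) < ⊤ :=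
    ae_lt_top hFI_meas (by rw [hswap]; exact ENNReal.ofReal_ne_top)
  have hae : ∀ᵐ y ∂μ, ENNReal.ofReal (N y) = ∫⁻ θ in A, ENNReal.ofReal (f θ y * r θ) ∂Pri := by
    filter_upwards [hFIfin] with y hy
    have hmeas : Measurable (fun θ => f θ y * r θ) :=
      hf_meas.of_uncurry_right.mul hr_meas
    have hfin : Integrable (fun θ => f θ y * r θ) (Pri.restrict A) := by
      refine ⟨hmeas.aestronglyMeasurable, ?_⟩
      rw [hasFiniteIntegral_iff_ofReal (ae_of_all _ fun θ => mul_nonneg (hf_nonneg θ y) (hr_nonneg θ))]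
      exact hy
    exact ofReal_integral_eq_lintegral_ofReal hfin
      (ae_of_all _ fun θ => mul_nonneg (hf_nonneg θ y) (hr_nonneg θ))
  have hN_nonneg : ∀ y, 0 ≤ N y := fun y =>
    integral_nonneg fun θ => mul_nonneg (hf_nonneg θ y) (hr_nonneg θ)
  have hNlint : ∫⁻ y, ENNReal.ofReal (N y) ∂μ = ENNReal.ofReal Lz := by
    rw [lintegral_congr_ae hae]; exact hswap
  have hN_meas : Measurable N := by
    have h1 : StronglyMeasurable (fun p : 𝕐 × Θ => f p.2 p.1 * r p.2) :=
      ((hf_meas.comp measurable_swap).mul (hr_meas.comp measurable_snd)).stronglyMeasurable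
    exact h1.integral_prod_right'.measurable
  have hN_int : Integrable N μ := by
    refine ⟨hN_meas.aestronglyMeasurable, ?_⟩
    rw [hasFiniteIntegral_iff_ofReal (ae_of_all _ hN_nonneg), hNlint]
    exact ENNReal.ofReal_lt_top
  have hN_integral : ∫ y, N y ∂μ = Lz := by
    have h1 := ofReal_integral_eq_lintegral_ofReal hN_int (ae_of_all _ hN_nonneg)
    rw [hNlint] at h1
    exact (ENNReal.ofReal_eq_ofReal_iff (integral_nonneg hN_nonneg) hL.le).mp h1
  set fh : 𝕐 → ℝ := fun y => N y / Lz with hfh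
  have hfh_nonneg : ∀ y, 0 ≤ fh y := fun y => div_nonneg (hN_nonneg y) hL.le
  have hfh_meas : Measurable fh := hN_meas.div_const _
  have hfh_int : Integrable fh μ := hN_int.div_const _
  have hfh_integral : ∫ y, fh y ∂μ = 1 := by
    rw [hfh]
    simp only [integral_div, hN_integral]
    exact div_self hL.ne'
  have hsq_meas : Measurable (fun y => Real.sqrt (fh y * fstar y)) :=
    (hfh_meas.mul hfstar_meas).sqrt
  have hsq_int : Integrable (fun y => Real.sqrt (fh y * fstar y)) μ := by
    refine Integrable.mono' ((hfh_int.add hfstar_intg).div_const 2) hsq_meas.aestronglyMeasurable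
      (ae_of_all _ fun y => ?_)
    rw [Real.norm_eq_abs, abs_of_nonneg (Real.sqrt_nonneg _)]
    exact sqrt_mul_le_add_div_two (hfh_nonneg y) (hfstar_nonneg y)
  set S : ℝ := ∫ y, Real.sqrt (fh y * fstar y) ∂μ with hS
  have hS_nonneg : 0 ≤ S := integral_nonneg fun y => Real.sqrt_nonneg _
  have hHsq : Hsq μ fstar fh = 2 - 2 * S := by
    have hpt : ∀ y, (Real.sqrt (fstar y) - Real.sqrt (fh y)) ^ 2
        = fstar y + fh y - 2 * Real.sqrt (fh y * fstar y) := by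
      intro y
      rw [sub_sq, Real.sq_sqrt (hfstar_nonneg y), Real.sq_sqrt (hfh_nonneg y),
        show Real.sqrt (fh y * fstar y) = Real.sqrt (fh y) * Real.sqrt (fstar y) from
          Real.sqrt_mul (hfh_nonneg y) _]
      ring
    have hadd : Integrable (fun y => fstar y + fh y) μ := hfstar_intg.add hfh_int
    have h2m : Integrable (fun y => 2 * Real.sqrt (fh y * fstar y)) μ := hsq_int.const_mul 2
    rw [Hsq]
    simp_rw [hpt]
    rw [integral_sub hadd h2m, integral_add hfstar_intg hfh_int, integral_const_mul,
      hfstar_int, hfh_integral, ← hS]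
    ring
  have hν_univ : ν Set.univ = 1 := by
    rw [hν, withDensity_apply _ MeasurableSet.univ, Measure.restrict_univ,
      ← ofReal_integral_eq_lintegral_ofReal hfstar_intg (ae_of_all _ hfstar_nonneg),
      hfstar_int, ENNReal.ofReal_one]
  have hHsq_nonneg : 0 ≤ Hsq μ fstar fh := integral_nonneg fun y => sq_nonneg _
  refine ⟨?_, ?_, ?_⟩
  · show ∫ y, (Real.sqrt (fh y / fstar y) - 1) ∂ν = -(hdist μ fstar fh)
    have hwd : ∫ y, (Real.sqrt (fh y / fstar y) - 1) ∂ν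
        = ∫ y, fstar y * (Real.sqrt (fh y / fstar y) - 1) ∂μ := by
      have hid : (fun y => ENNReal.ofReal (fstar y))
          = (fun y => ((fstar y).toNNReal : ℝ≥0∞)) := rfl
      rw [hν, hid, integral_withDensity_eq_integral_smul hfstar_meas.real_toNNReal]
      refine integral_congr_ae (ae_of_all _ fun y => ?_)
      show (fstar y).toNNReal • (Real.sqrt (fh y / fstar y) - 1)
          = fstar y * (Real.sqrt (fh y / fstar y) - 1)
      rw [NNReal.smul_def, Real.coe_toNNReal _ (hfstar_nonneg y), smul_eq_mul]
    have hptw : (fun y => fstar y * (Real.sqrt (fh y / fstar y) - 1))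
        = fun y => Real.sqrt (fh y * fstar y) - fstar y :=
      funext fun y => mul_sqrt_div (hfh_nonneg y) (hfstar_nonneg y)
    rw [hwd, hptw, integral_sub hsq_int hfstar_intg, hfstar_int, hdist, hHsq, ← hS]
    ring
  · show ∫⁻ y, ‖(Real.sqrt (fh y / fstar y) - 1)‖₊ ∂ν ≤ 2
    have hb1 : ∀ y, (‖(Real.sqrt (fh y / fstar y) - 1)‖₊ : ℝ≥0∞)
        ≤ (ENNReal.ofReal (fh y / fstar y) + 3) / 2 := by
      intro y
      rw [← enorm_eq_nnnorm, ← ofReal_norm, Real.norm_eq_abs]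
      calc ENNReal.ofReal |Real.sqrt (fh y / fstar y) - 1|
          ≤ ENNReal.ofReal ((fh y / fstar y + 3) / 2) :=
            ENNReal.ofReal_le_ofReal
              (abs_sqrt_sub_one_le (div_nonneg (hfh_nonneg y) (hfstar_nonneg y)))
        _ = ENNReal.ofReal (fh y / fstar y + 3) / 2 := by
            rw [ENNReal.ofReal_div_of_pos two_pos]; norm_num
        _ = (ENNReal.ofReal (fh y / fstar y) + 3) / 2 := by
            rw [ENNReal.ofReal_add (div_nonneg (hfh_nonneg y) (hfstar_nonneg y)) (by norm_num)]
            norm_num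
    have hfhlint : ∫⁻ y, ENNReal.ofReal (fh y) ∂μ = 1 := by
      rw [← ofReal_integral_eq_lintegral_ofReal hfh_int (ae_of_all _ hfh_nonneg),
        hfh_integral, ENNReal.ofReal_one]
    have hS1 : ∫⁻ y, ENNReal.ofReal (fh y / fstar y) ∂ν ≤ 1 := by
      rw [hν, lintegral_withDensity_eq_lintegral_mul μ hfstar_meas.ennreal_ofReal
        (show Measurable (fun y => ENNReal.ofReal (fh y / fstar y)) from (hfh_meas.div hfstar_meas).ennreal_ofReal)]
      have hle : ∀ y, ((fun y => ENNReal.ofReal (fstar y)) *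
          fun y => ENNReal.ofReal (fh y / fstar y)) y ≤ ENNReal.ofReal (fh y) := by
        intro y
        simp only [Pi.mul_apply]
        by_cases h0 : fstar y = 0
        · simp [h0]
        · rw [← ENNReal.ofReal_mul (hfstar_nonneg y), mul_comm (fstar y),
            div_mul_cancel₀ _ h0]
      calc _ ≤ ∫⁻ y, ENNReal.ofReal (fh y) ∂μ := lintegral_mono hle
        _ = 1 := hfhlint
    calc ∫⁻ y, (‖(Real.sqrt (fh y / fstar y) - 1)‖₊ : ℝ≥0∞) ∂ν
        ≤ ∫⁻ y, (ENNReal.ofReal (fh y / fstar y) + 3) / 2 ∂ν := lintegral_mono hb1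
      _ = ((∫⁻ y, ENNReal.ofReal (fh y / fstar y) ∂ν) + 3 * ν Set.univ) / 2 := by
          simp_rw [div_eq_mul_inv]
          rw [lintegral_mul_const' _ _ (by simp),
            lintegral_add_right _ measurable_const, lintegral_const]
      _ ≤ ((1 : ℝ≥0∞) + 3 * 1) / 2 := by
          gcongr
          rw [hν_univ]
      _ = 2 := by
          rw [eq_comm, ENNReal.eq_div_iff two_ne_zero (by norm_num)]
          norm_num
  · constructor
    · show 0 ≤ hdist μ fstar fh
      rw [hdist]; positivity
    · show hdist μ fstar fh ≤ 1
      rw [hdist, hHsq]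
      linarith


/-- **Martingale structure of the restricted numerators.** For every `i ≥ 1`
(here `i+1` with `i : ℕ`, and observations indexed from `0`):
`L_i/L_{i-1} = f̂_{i-1}^A(Y_i)/f*(Y_i)` a.s.,
`E[(L_i/L_{i-1})^{1/2} - 1 | 𝒴_{i-1}] = -h(f*, f̂_{i-1}^A)` a.s., and consequently
`X_i = (L_i/L_{i-1})^{1/2} - 1 + h(f*, f̂_{i-1}^A)` is a martingale difference
sequence. -/
theorem stmt_8
    {𝕐 : Type*} [MeasurableSpace 𝕐] (μ : Measure 𝕐) [SigmaFinite μ]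
    {Θ : Type*} [MeasurableSpace Θ] (Pri : Measure Θ) [IsProbabilityMeasure Pri]
    (f : Θ → 𝕐 → ℝ) (hf_meas : Measurable (Function.uncurry f))
    (hf_nonneg : ∀ θ y, 0 ≤ f θ y) (hf_int : ∀ θ, ∫ y, f θ y ∂μ = 1)
    (fstar : 𝕐 → ℝ) (hfstar_meas : Measurable fstar)
    (hfstar_nonneg : ∀ y, 0 ≤ fstar y) (hfstar_int : ∫ y, fstar y ∂μ = 1)
    {Ω : Type*} [MeasurableSpace Ω] (P : Measure Ω) [IsProbabilityMeasure P]
    (Y : ℕ → Ω → 𝕐) (hY_meas : ∀ i, Measurable (Y i))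
    (hY_indep : iIndepFun Y P)
    (hY_law : ∀ i, P.map (Y i) = μ.withDensity (fun y => ENNReal.ofReal (fstar y)))
    (A : Set Θ) (hA_meas : MeasurableSet A) (hA_pos : 0 < Pri A)
    -- assume `L_i > 0` almost surely for each `i`
    (hL_pos : ∀ i : ℕ, ∀ᵐ ω ∂P, 0 < Lnum Pri f fstar Y A i ω) :
    ∀ i : ℕ,
      ((∀ᵐ ω ∂P,
        Lnum Pri f fstar Y A (i + 1) ω / Lnum Pri f fstar Y A i ω =
          predDensA Pri f fstar Y A i (Y i ω) ω / fstar (Y i ω)) ∧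
      (P[(fun ω => Real.sqrt
            (Lnum Pri f fstar Y A (i + 1) ω / Lnum Pri f fstar Y A i ω) - 1) |
          obsSigma Y i] =ᵐ[P]
        fun ω => -(hdist μ fstar (fun y => predDensA Pri f fstar Y A i y ω))) ∧
      (P[(fun ω => Real.sqrt
            (Lnum Pri f fstar Y A (i + 1) ω / Lnum Pri f fstar Y A i ω) - 1 +
            hdist μ fstar (fun y => predDensA Pri f fstar Y A i y ω)) |
          obsSigma Y i] =ᵐ[P] 0)) := by
  intro i
  classical
  have hZ : Measurable (fun ω (j : Fin i) => Y j ω) :=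
    measurable_pi_lambda _ fun j => hY_meas j
  set Z : Ω → (Fin i → 𝕐) := fun ω (j : Fin i) => Y j ω with hZdef
  set r : Θ → (Fin i → 𝕐) → ℝ := fun θ z => ∏ j : Fin i, f θ (z j) / fstar (z j) with hrdef
  have hrZ : ∀ θ ω, Rlik f fstar Y i θ ω = r θ (Z ω) := by
    intro θ ω
    simp only [Rlik, hrdef]
    exact (Fin.prod_univ_eq_prod_range (fun j => f θ (Y j ω) / fstar (Y j ω)) i).symm
  set L : (Fin i → 𝕐) → ℝ := fun z => ∫ θ in A, r θ z ∂Pri with hLdef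
  set N : (Fin i → 𝕐) → 𝕐 → ℝ := fun z y => ∫ θ in A, f θ y * r θ z ∂Pri with hNdef
  have hLnum : ∀ ω, Lnum Pri f fstar Y A i ω = L (Z ω) := fun ω =>
    integral_congr_ae (ae_of_all _ fun θ => hrZ θ ω)
  have hNnum : ∀ y ω, (∫ θ in A, f θ y * Rlik f fstar Y i θ ω ∂Pri) = N (Z ω) y := fun y ω =>
    integral_congr_ae (ae_of_all _ fun θ => by
      show f θ y * Rlik f fstar Y i θ ω = f θ y * r θ (Z ω)
      rw [hrZ])
  have key1 : ∀ ω, Lnum Pri f fstar Y A (i + 1) ω = N (Z ω) (Y i ω) / fstar (Y i ω) := by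
    intro ω
    have hstep : ∀ θ, Rlik f fstar Y (i + 1) θ ω
        = f θ (Y i ω) * r θ (Z ω) / fstar (Y i ω) := by
      intro θ
      have h1 : Rlik f fstar Y (i + 1) θ ω
          = Rlik f fstar Y i θ ω * (f θ (Y i ω) / fstar (Y i ω)) := by
        simp only [Rlik]
        exact Finset.prod_range_succ _ i
      rw [h1, hrZ θ ω]
      ring
    calc Lnum Pri f fstar Y A (i + 1) ω
        = ∫ θ in A, f θ (Y i ω) * r θ (Z ω) / fstar (Y i ω) ∂Pri :=
          integral_congr_ae (ae_of_all _ fun θ => hstep θ)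
      _ = (∫ θ in A, f θ (Y i ω) * r θ (Z ω) ∂Pri) / fstar (Y i ω) := integral_div _ _
      _ = N (Z ω) (Y i ω) / fstar (Y i ω) := rfl
  have hpred : ∀ ω, (fun y => predDensA Pri f fstar Y A i y ω)
      = fun y => N (Z ω) y / L (Z ω) := by
    intro ω; funext y
    rw [predDensA, hNnum, hLnum]
  have conj1 : ∀ ω, Lnum Pri f fstar Y A (i + 1) ω / Lnum Pri f fstar Y A i ω
      = predDensA Pri f fstar Y A i (Y i ω) ω / fstar (Y i ω) := by
    intro ω
    have h2 : predDensA Pri f fstar Y A i (Y i ω) ω = N (Z ω) (Y i ω) / L (Z ω) :=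
      congrFun (hpred ω) (Y i ω)
    rw [key1, hLnum, h2, div_right_comm]
  -- measurability of r, L, N
  have hr_meas : Measurable (Function.uncurry r) := by
    show Measurable fun p : Θ × (Fin i → 𝕐) => ∏ j : Fin i, f p.1 (p.2 j) / fstar (p.2 j)
    refine Finset.measurable_prod _ fun j _ => ?_
    exact (hf_meas.comp (measurable_fst.prodMk
      ((measurable_pi_apply j).comp measurable_snd))).div
      (hfstar_meas.comp ((measurable_pi_apply j).comp measurable_snd))
  have hr_nonneg : ∀ θ z, 0 ≤ r θ z := fun θ z =>
    Finset.prod_nonneg fun j _ => div_nonneg (hf_nonneg _ _) (hfstar_nonneg _)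
  have hL_meas : Measurable L := by
    have h1 : StronglyMeasurable (fun p : (Fin i → 𝕐) × Θ => r p.2 p.1) :=
      (hr_meas.comp measurable_swap).stronglyMeasurable
    exact h1.integral_prod_right'.measurable
  have hN2 : Measurable (fun q : (Fin i → 𝕐) × 𝕐 => N q.1 q.2) := by
    have h1 : StronglyMeasurable (fun q : ((Fin i → 𝕐) × 𝕐) × Θ => f q.2 q.1.2 * r q.2 q.1.1) :=
      ((hf_meas.comp (measurable_snd.prodMk measurable_fst.snd)).mul
        (hr_meas.comp (measurable_snd.prodMk measurable_fst.fst))).stronglyMeasurable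
    exact h1.integral_prod_right'.measurable
  set G : (Fin i → 𝕐) × 𝕐 → ℝ :=
    fun p => Real.sqrt ((N p.1 p.2 / L p.1) / fstar p.2) - 1 with hGdef
  have hG_meas : Measurable G :=
    (((hN2.div (hL_meas.comp measurable_fst)).div
      (hfstar_meas.comp measurable_snd)).sqrt).sub measurable_const
  have hGsm : StronglyMeasurable G := hG_meas.stronglyMeasurable
  -- independence
  have hdisj : Disjoint (Finset.range i) ({i} : Finset ℕ) := by
    simp [Finset.disjoint_singleton_right]
  have hind0 := hY_indep.indepFun_finset (Finset.range i) ({i} : Finset ℕ) hdisj hY_meas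
  have hφ : Measurable (fun v : (↥(Finset.range i) → 𝕐) =>
      (fun k : Fin i => v ⟨(k : ℕ), Finset.mem_range.mpr k.isLt⟩)) :=
    measurable_pi_lambda _ fun k => measurable_pi_apply _
  have hψ : Measurable (fun v : (↥({i} : Finset ℕ) → 𝕐) => v ⟨i, Finset.mem_singleton_self i⟩) :=
    measurable_pi_apply _
  have hind : IndepFun Z (Y i) P := hind0.comp hφ hψ
  have hmap : P.map (fun ω => (Z ω, Y i ω)) = (P.map Z).prod (P.map (Y i)) :=
    (indepFun_iff_map_prod_eq_prod_map_map hZ.aemeasurable (hY_meas i).aemeasurable).mp hind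
  set ν : Measure 𝕐 := μ.withDensity (fun y => ENNReal.ofReal (fstar y)) with hνdef
  have hνY : P.map (Y i) = ν := hY_law i
  set κ : Measure (Fin i → 𝕐) := P.map Z with hκdef
  haveI : IsProbabilityMeasure κ := Measure.isProbabilityMeasure_map hZ.aemeasurable
  -- good-z facts
  have hgood := fun (z : Fin i → 𝕐) (hz : (0:ℝ) < L z) =>
    aux_good (μ := μ) (Pri := Pri) hf_meas hf_nonneg hf_int hfstar_meas hfstar_nonneg hfstar_int
      hA_meas (r := fun θ => r θ z) hr_meas.of_uncurry_right (fun θ => hr_nonneg θ z) hz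
  have haeP : ∀ᵐ ω ∂P, 0 < L (Z ω) := by
    filter_upwards [hL_pos i] with ω h
    rwa [hLnum ω] at h
  have haeκ : ∀ᵐ z ∂κ, 0 < L z := by
    rw [hκdef]
    exact (ae_map_iff hZ.aemeasurable (measurableSet_lt measurable_const hL_meas)).mpr haeP
  -- product integrability
  have hGint : Integrable G (κ.prod ν) := by
    refine ⟨hGsm.aestronglyMeasurable, ?_⟩
    show (∫⁻ p, (‖G p‖₊ : ℝ≥0∞) ∂(κ.prod ν)) < ⊤
    rw [lintegral_prod (fun p => (‖G p‖₊ : ℝ≥0∞)) hG_meas.enorm.aemeasurable]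
    calc ∫⁻ z, ∫⁻ y, (‖G (z, y)‖₊ : ℝ≥0∞) ∂ν ∂κ
        ≤ ∫⁻ _, 2 ∂κ := by
          refine lintegral_mono_ae ?_
          filter_upwards [haeκ] with z hz
          exact (hgood z hz).2.1
      _ = 2 := by simp
      _ < ⊤ := by norm_num
  have hGprodint : Integrable G ((P.map Z).prod (P.map (Y i))) := by
    rw [hνY]
    exact hGint
  have hfrz := freezing_condexp P (Y i) Z (hY_meas i) hZ hmap G hGsm hGprodint
  have hGZint : Integrable (fun ω => G (Z ω, Y i ω)) P := by
    have h1 := hGprodint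
    rw [← hmap] at h1
    exact (integrable_map_measure hGsm.aestronglyMeasurable
      (hZ.prodMk (hY_meas i)).aemeasurable).mp h1
  set D : (Fin i → 𝕐) → ℝ := fun z => hdist μ fstar (fun y => N z y / L z) with hDdef
  have hXc : P[(fun ω => G (Z ω, Y i ω)) | MeasurableSpace.comap Z inferInstance]
      =ᵐ[P] fun ω => -(D (Z ω)) := by
    refine hfrz.trans ?_
    filter_upwards [haeP] with ω hω
    rw [hνY]
    exact (hgood (Z ω) hω).1
  have hobs : obsSigma Y i = MeasurableSpace.comap Z inferInstance := rfl
  have hfun1 : (fun ω => Real.sqrt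
      (Lnum Pri f fstar Y A (i + 1) ω / Lnum Pri f fstar Y A i ω) - 1)
      = fun ω => G (Z ω, Y i ω) := by
    funext ω
    rw [key1, hLnum, div_right_comm]
  have hrhs : (fun ω => -(hdist μ fstar (fun y => predDensA Pri f fstar Y A i y ω)))
      = fun ω => -(D (Z ω)) := by
    funext ω
    rw [hpred ω]
  have conj2 : P[(fun ω => Real.sqrt
        (Lnum Pri f fstar Y A (i + 1) ω / Lnum Pri f fstar Y A i ω) - 1) | obsSigma Y i]
      =ᵐ[P] fun ω => -(hdist μ fstar (fun y => predDensA Pri f fstar Y A i y ω)) := by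
    rw [hobs, hfun1, hrhs]
    exact hXc
  -- third conjunct
  have hD_meas : StronglyMeasurable D := by
    have hDeq : D = fun z => (∫ y, (Real.sqrt (fstar y) - Real.sqrt (N z y / L z)) ^ 2 ∂μ) / 2 := by
      funext z
      show hdist μ fstar (fun y => N z y / L z) = _
      rw [hdist, Hsq]
    rw [hDeq]
    have h1 : StronglyMeasurable (fun q : (Fin i → 𝕐) × 𝕐 =>
        (Real.sqrt (fstar q.2) - Real.sqrt (N q.1 q.2 / L q.1)) ^ 2) :=
      (((hfstar_meas.comp measurable_snd).sqrt.sub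
        ((hN2.div (hL_meas.comp measurable_fst)).sqrt)).pow_const 2).stronglyMeasurable
    exact (h1.integral_prod_right'.measurable.div_const 2).stronglyMeasurable
  have hc_sm : StronglyMeasurable[MeasurableSpace.comap Z inferInstance] (fun ω => D (Z ω)) :=
    hD_meas.comp_measurable (measurable_iff_comap_le.2 le_rfl)
  have hc_int : Integrable (fun ω => D (Z ω)) P := by
    refine Integrable.mono' (integrable_const (1 : ℝ))
      (hD_meas.comp_measurable hZ).aestronglyMeasurable ?_
    filter_upwards [haeP] with ω hω
    obtain ⟨h0, h1⟩ := (hgood (Z ω) hω).2.2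
    rw [Real.norm_eq_abs, abs_of_nonneg h0]
    exact h1
  have hcc : P[(fun ω => D (Z ω)) | MeasurableSpace.comap Z inferInstance]
      =ᵐ[P] (fun ω => D (Z ω)) := by
    rw [condExp_of_stronglyMeasurable (hZ.comap_le) hc_sm hc_int]
  have htarget : (fun ω => Real.sqrt
        (Lnum Pri f fstar Y A (i + 1) ω / Lnum Pri f fstar Y A i ω) - 1
        + hdist μ fstar (fun y => predDensA Pri f fstar Y A i y ω))
      = (fun ω => G (Z ω, Y i ω)) + (fun ω => D (Z ω)) := by
    funext ω
    simp only [Pi.add_apply]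
    rw [congrFun hfun1 ω, hpred ω]
  have conj3 : P[(fun ω => Real.sqrt
        (Lnum Pri f fstar Y A (i + 1) ω / Lnum Pri f fstar Y A i ω) - 1
        + hdist μ fstar (fun y => predDensA Pri f fstar Y A i y ω)) | obsSigma Y i]
      =ᵐ[P] 0 := by
    rw [hobs, htarget]
    refine (condExp_add hGZint hc_int _).trans ?_
    have hsum := hXc.add hcc
    refine hsum.trans ?_
    filter_upwards with ω
    simp [Pi.add_apply]
  exact ⟨Eventually.of_forall conj1, conj2, conj3⟩
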